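/- For every bipartite quantum channel N: A'B'→AB, its conditional min-entropy is sandwiched between the two conditional min-entropies of its Choi state: S↓_∞(R_AA|R_BB)_{Φ^N} − log|A'| ≤ S_∞[A|B]_N ≤ S_∞(R_AA|R_BB)_{Φ^N} − log|A'|. -/

import Mathlib

/-!
The upper bound holds because the Choi state of every channel `Q : B' → B` is a state on
`R_B B`, so the infimum over channels runs over a subset of the states. For the lower bound,
trace preservation of `N` makes the marginal `tr_{R_A A} Φ^N` a positive semidefinite
matrix whose reduced state on `R_B` is maximally mixed; it is therefore the Choi state of a channel `Q : B' → B`,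
and this `Q` is a feasible point of the infimum defining `S_∞[A|B]_N`.
-/

open scoped ComplexOrder Kronecker
open Matrix

noncomputable section

/-- Square complex matrices indexed by `ι`. -/
abbrev Mat (ι : Type) : Type := Matrix ι ι ℂ

/-- A quantum state: a positive semidefinite matrix of trace one. -/
def IsState {ι : Type} [Fintype ι] (ρ : Mat ι) : Prop :=
  ρ.PosSemidef ∧ ρ.trace = 1

/-- Max-relative entropy `D_∞(ρ‖σ) = log₂ inf {λ ≥ 0 : λ•σ − ρ ⪰ 0}` as an extended real;
it is `+∞` (`sInf ∅ = ⊤`) when no such `λ` exists. -/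
def Dmax {ι : Type} [Fintype ι] (ρ σ : Mat ι) : EReal :=
  sInf {x : EReal | ∃ l : ℝ, 0 ≤ l ∧ ((l : ℂ) • σ - ρ).PosSemidef ∧
    x = ((Real.logb 2 l : ℝ) : EReal)}

/-- Partial trace over the first tensor factor. -/
def trFst {ιA ιB : Type} [Fintype ιA] (ρ : Matrix (ιA × ιB) (ιA × ιB) ℂ) : Mat ιB :=
  Matrix.of fun i j => ∑ k : ιA, ρ (k, i) (k, j)

/-- Partial trace over the second tensor factor. -/
def trSnd {ιA ιB : Type} [Fintype ιB] (ρ : Matrix (ιA × ιB) (ιA × ιB) ℂ) : Mat ιA :=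
  Matrix.of fun i j => ∑ k : ιB, ρ (i, k) (j, k)

/-- Conditional min-entropy `S_∞(A|B)_ρ := −inf over states σ on B of D_∞(ρ‖1_A⊗σ)`. -/
def condMin {ιA ιB : Type} [Fintype ιA] [DecidableEq ιA] [Fintype ιB]
    (ρ : Matrix (ιA × ιB) (ιA × ιB) ℂ) : EReal :=
  -(⨅ σ : {σ : Mat ιB // IsState σ}, Dmax ρ ((1 : Mat ιA) ⊗ₖ σ.1))

/-- `S↓_∞(A|B)_ρ := −D_∞(ρ‖1_A⊗ρ_B)` with `ρ_B = tr_A ρ`. -/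
def condMinDown {ιA ιB : Type} [Fintype ιA] [DecidableEq ιA] [Fintype ιB]
    (ρ : Matrix (ιA × ιB) (ιA × ιB) ℂ) : EReal :=
  -(Dmax ρ ((1 : Mat ιA) ⊗ₖ trFst ρ))

/-- The (unnormalized) Choi matrix of a linear map of matrices. -/
def choiMatrix {ι κ : Type} [DecidableEq ι] (L : Mat ι →ₗ[ℂ] Mat κ) :
    Matrix (ι × κ) (ι × κ) ℂ :=
  Matrix.of fun p q => L (Matrix.single p.1 q.1 1) p.2 q.2

/-- A quantum channel: a linear map that is completely positive (positive semidefinite Choi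
matrix) and trace preserving. -/
def IsChannel {ι κ : Type} [Fintype ι] [DecidableEq ι] [Fintype κ]
    (L : Mat ι →ₗ[ℂ] Mat κ) : Prop :=
  (choiMatrix L).PosSemidef ∧ ∀ X : Mat ι, (L X).trace = X.trace

/-- The Choi state `Φ^L = (id⊗L)(Φ_d)` of a linear map of matrices. -/
def choiState {ι κ : Type} [Fintype ι] [DecidableEq ι] (L : Mat ι →ₗ[ℂ] Mat κ) :
    Matrix (ι × κ) (ι × κ) ℂ :=
  ((Fintype.card ι : ℂ))⁻¹ • choiMatrix L

/-- The Choi state of a bipartite channel `N : A'B' → AB`, re-indexed across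
the cut `R_A A : R_B B`. -/
def biChoiState {ιA' ιB' κA κB : Type} [Fintype ιA'] [DecidableEq ιA']
    [Fintype ιB'] [DecidableEq ιB'] (N : Mat (ιA' × ιB') →ₗ[ℂ] Mat (κA × κB)) :
    Matrix ((ιA' × κA) × (ιB' × κB)) ((ιA' × κA) × (ιB' × κB)) ℂ :=
  Matrix.of fun p q =>
    choiState N ((p.1.1, p.2.1), (p.1.2, p.2.2)) ((q.1.1, q.2.1), (q.1.2, q.2.2))

/-- Conditional min-entropy of a bipartite channel:
`S_∞[A|B]_N := −inf over channels Q : B'→B of D_∞(Φ^N ‖ 1_{R_A A} ⊗ Φ^Q) − log₂|A'|`. -/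
def chanCondMin {ιA' ιB' κA κB : Type}
    [Fintype ιA'] [DecidableEq ιA'] [Fintype ιB'] [DecidableEq ιB']
    [Fintype κA] [DecidableEq κA] [Fintype κB] [DecidableEq κB]
    (N : Mat (ιA' × ιB') →ₗ[ℂ] Mat (κA × κB)) : EReal :=
  (-(⨅ Q : {Q : Mat ιB' →ₗ[ℂ] Mat κB // IsChannel Q},
      Dmax (biChoiState N) ((1 : Mat (ιA' × κA)) ⊗ₖ choiState Q.1)))
    - ((Real.logb 2 (Fintype.card ιA' : ℝ) : ℝ) : EReal)

/-- Rank-one projector `|v⟩⟨v|` associated with a vector. -/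
def outer {ι : Type} (v : ι → ℂ) : Mat ι := Matrix.vecMulVec v (star v)

/-- Vectorization `vec(V) := ∑ i, e_i ⊗ V e_i` of a matrix `V : ℂ^ι → ℂ^κ`. -/
def vecRect {ι κ : Type} (V : Matrix κ ι ℂ) : ι × κ → ℂ := fun p => V p.2 p.1

/-- A maximally entangled state on `ι1 × ι2`: `|φ⟩⟨φ|` with
`|φ⟩ = (1/√d) ∑ i, e_i ⊗ f_i` for orthonormal families `e`, `f`, `d = min(|ι1|,|ι2|)`. -/
def IsMaxEntangled {ι1 ι2 : Type} [Fintype ι1] [Fintype ι2]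
    (Φ : Matrix (ι1 × ι2) (ι1 × ι2) ℂ) : Prop :=
  ∃ (e : Fin (min (Fintype.card ι1) (Fintype.card ι2)) → ι1 → ℂ)
    (f : Fin (min (Fintype.card ι1) (Fintype.card ι2)) → ι2 → ℂ),
    (∀ i j, ∑ x : ι1, (starRingEnd ℂ) (e i x) * e j x = if i = j then 1 else 0) ∧
    (∀ i j, ∑ x : ι2, (starRingEnd ℂ) (f i x) * f j x = if i = j then 1 else 0) ∧
    Φ = outer (fun p => (((Real.sqrt (min (Fintype.card ι1) (Fintype.card ι2) : ℝ))⁻¹ : ℝ) : ℂ) *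
      ∑ i, e i p.1 * f i p.2)

/-- Partial transpose over the second tensor factor. -/
def ptransposeSnd {ιA ιB : Type} (ρ : Matrix (ιA × ιB) (ιA × ιB) ℂ) :
    Matrix (ιA × ιB) (ιA × ιB) ℂ :=
  Matrix.of fun p q => ρ (p.1, q.2) (q.1, p.2)

/-- A bipartite state is PPT if its partial transpose is positive semidefinite. -/
def IsPPT {ιA ιB : Type} [Fintype ιA] [Fintype ιB]
    (ρ : Matrix (ιA × ιB) (ιA × ιB) ℂ) : Prop :=
  (ptransposeSnd ρ).PosSemidef

/-- Conjugation channel `X ↦ W X Wᴴ`. -/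
def conjMap {ι κ : Type} [Fintype ι] (W : Matrix κ ι ℂ) : Mat ι →ₗ[ℂ] Mat κ where
  toFun X := W * X * Wᴴ
  map_add' X Y := by simp [Matrix.mul_add, Matrix.add_mul]
  map_smul' c X := by simp [Matrix.mul_smul, Matrix.smul_mul]

/-- The controlled unitary matrix `∑ j, |j⟩⟨j| ⊗ U_j`. -/
def ctrlU {n m : ℕ} (U : Fin n → Mat (Fin m)) : Mat (Fin n × Fin m) :=
  Matrix.of fun p q => (if p.1 = q.1 then 1 else 0) * U p.1 p.2 q.2

/-- The replacer channel `X ↦ tr(X) • γ`. -/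
def replacer {ι κ : Type} [Fintype ι] (γ : Mat κ) : Mat ι →ₗ[ℂ] Mat κ where
  toFun X := X.trace • γ
  map_add' X Y := by simp [Matrix.trace_add, add_smul]
  map_smul' c X := by simp [Matrix.trace_smul, mul_smul]

/-- The maximally mixed state `π_m = 1_m / m`. -/
def uniformState (m : ℕ) : Mat (Fin m) := ((m : ℂ))⁻¹ • (1 : Mat (Fin m))

/-- Tensor product of two linear maps of matrices. -/
def tensorL {ι1 κ1 ι2 κ2 : Type} [Fintype ι1] [DecidableEq ι1]
    (L1 : Mat ι1 →ₗ[ℂ] Mat κ1) (L2 : Mat ι2 →ₗ[ℂ] Mat κ2) :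
    Mat (ι1 × ι2) →ₗ[ℂ] Mat (κ1 × κ2) where
  toFun X := Matrix.of fun p q =>
    ∑ i1 : ι1, ∑ j1 : ι1,
      L1 (Matrix.single i1 j1 1) p.1 q.1 *
        L2 (Matrix.of fun i2 j2 => X (i1, i2) (j1, j2)) p.2 q.2
  map_add' X Y := by
    ext p q
    have h : ∀ i1 j1 : ι1,
        (Matrix.of fun i2 j2 => X (i1, i2) (j1, j2) + Y (i1, i2) (j1, j2)) =
          (Matrix.of fun i2 j2 => X (i1, i2) (j1, j2)) +
            (Matrix.of fun i2 j2 => Y (i1, i2) (j1, j2)) := by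
      intro i1 j1; ext i2 j2; simp
    simp only [Matrix.add_apply, Matrix.of_apply, h, map_add, mul_add,
      Finset.sum_add_distrib]
  map_smul' c X := by
    ext p q
    have h : ∀ i1 j1 : ι1,
        (Matrix.of fun i2 j2 => c * X (i1, i2) (j1, j2)) =
          c • (Matrix.of fun i2 j2 => X (i1, i2) (j1, j2)) := by
      intro i1 j1; ext i2 j2; simp
    simp only [Matrix.smul_apply, smul_eq_mul, Matrix.of_apply, RingHom.id_apply, h,
      LinearMap.map_smul]
    rw [Finset.mul_sum]
    refine Finset.sum_congr rfl fun i1 _ => ?_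
    rw [Finset.mul_sum]
    refine Finset.sum_congr rfl fun j1 _ => ?_
    ring


/-- The square root of a positive semidefinite matrix, as `Matrix.PosSemidef.sqrt` was
defined in the older Mathlib (since removed). -/
def posSemidefSqrt {ι : Type} [Fintype ι] [DecidableEq ι] {M : Mat ι} (hM : M.PosSemidef) :
    Mat ι :=
  hM.1.eigenvectorUnitary.1 * diagonal ((↑) ∘ (√·) ∘ hM.1.eigenvalues) *
    (star hM.1.eigenvectorUnitary : Mat ι)

/-- Square root of a positive semidefinite matrix (junk value `0` otherwise). -/
def matSqrt {ι : Type} [Fintype ι] [DecidableEq ι] (M : Mat ι) : Mat ι :=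
  letI := Classical.dec M.PosSemidef
  if h : M.PosSemidef then posSemidefSqrt h else 0

/-- Trace norm `‖X‖₁ = tr √(XᴴX)`. -/
def traceNorm {ι : Type} [Fintype ι] [DecidableEq ι] (X : Mat ι) : ℝ :=
  (matSqrt (Xᴴ * X)).trace.re

/-- Fidelity `F(ρ,σ) = ‖√ρ√σ‖₁²`. -/
def fidelity {ι : Type} [Fintype ι] [DecidableEq ι] (ρ σ : Mat ι) : ℝ :=
  (traceNorm (matSqrt ρ * matSqrt σ)) ^ 2

/-- Purified distance `P(ρ,σ) = √(1 − F(ρ,σ))`. -/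
def purifiedDist {ι : Type} [Fintype ι] [DecidableEq ι] (ρ σ : Mat ι) : ℝ :=
  Real.sqrt (1 - fidelity ρ σ)

/-- Purified channel distance `P[N,M] = sup over states ψ of P((id⊗N)ψ, (id⊗M)ψ)`. -/
def purifiedChannelDist {ι κ : Type} [Fintype ι] [DecidableEq ι] [Fintype κ] [DecidableEq κ]
    (L1 L2 : Mat ι →ₗ[ℂ] Mat κ) : ℝ :=
  ⨆ ψ : {ψ : Matrix (ι × ι) (ι × ι) ℂ // IsState ψ},
    purifiedDist (tensorL (LinearMap.id : Mat ι →ₗ[ℂ] Mat ι) L1 ψ.1)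
      (tensorL (LinearMap.id : Mat ι →ₗ[ℂ] Mat ι) L2 ψ.1)

/-- Diamond norm `‖L‖◊ = sup over states ρ on R⊗in (R ≃ in) of ‖(id⊗L)ρ‖₁`. -/
def diamondNorm {ι κ : Type} [Fintype ι] [DecidableEq ι] [Fintype κ] [DecidableEq κ]
    (L : Mat ι →ₗ[ℂ] Mat κ) : ℝ :=
  ⨆ ρ : {ρ : Matrix (ι × ι) (ι × ι) ℂ // IsState ρ},
    traceNorm (tensorL (LinearMap.id : Mat ι →ₗ[ℂ] Mat ι) L ρ.1)

/-- `−log₂ t`, as an extended real which is `+∞` for `t ≤ 0`. -/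
def negLogE (t : ℝ) : EReal := if t ≤ 0 then ⊤ else ((-Real.logb 2 t : ℝ) : EReal)

/-- Hypothesis-testing relative entropy
`D_H^ε(ρ‖σ) = −log₂ inf{tr(Λσ) : 0 ≤ Λ ≤ 1, tr(Λρ) ≥ 1−ε}`. -/
def DH {ι : Type} [Fintype ι] [DecidableEq ι] (ε : ℝ) (ρ σ : Mat ι) : EReal :=
  negLogE (sInf {t : ℝ | ∃ Λ : Mat ι, Λ.PosSemidef ∧ ((1 : Mat ι) - Λ).PosSemidef ∧
    1 - ε ≤ ((Λ * ρ).trace).re ∧ t = ((Λ * σ).trace).re})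

/-- Channel hypothesis-testing relative entropy
`D_H^ε[N‖M] = sup over states ψ of D_H^ε((id⊗N)ψ‖(id⊗M)ψ)`. -/
def DHchan {ι κ : Type} [Fintype ι] [DecidableEq ι] [Fintype κ] [DecidableEq κ]
    (ε : ℝ) (L1 L2 : Mat ι →ₗ[ℂ] Mat κ) : EReal :=
  ⨆ ψ : {ψ : Matrix (ι × ι) (ι × ι) ℂ // IsState ψ},
    DH ε (tensorL (LinearMap.id : Mat ι →ₗ[ℂ] Mat ι) L1 ψ.1)
      (tensorL (LinearMap.id : Mat ι →ₗ[ℂ] Mat ι) L2 ψ.1)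

/-- Channel max-relative entropy `D_∞[N‖M] = D_∞(Φ^N‖Φ^M)`. -/
def DmaxChan {ι κ : Type} [Fintype ι] [DecidableEq ι] [Fintype κ]
    (L1 L2 : Mat ι →ₗ[ℂ] Mat κ) : EReal :=
  Dmax (choiState L1) (choiState L2)

/-- Smoothed channel max-relative entropy
`D_∞^ε[N‖M] = inf{D_∞[Ñ‖M] : Ñ a channel with (1/2)P[N,Ñ] ≤ ε}`. -/
def DmaxChanSmooth {ι κ : Type} [Fintype ι] [DecidableEq ι] [Fintype κ] [DecidableEq κ]
    (ε : ℝ) (L1 L2 : Mat ι →ₗ[ℂ] Mat κ) : EReal :=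
  ⨅ Nt : {Nt : Mat ι →ₗ[ℂ] Mat κ //
      IsChannel Nt ∧ 2⁻¹ * purifiedChannelDist L1 Nt ≤ ε},
    DmaxChan Nt.1 L2

/-- A quantum superchannel: `Θ(N) = post ∘ (id_E ⊗ N) ∘ pre` for channels `pre`, `post`
and a finite-dimensional memory `E`. -/
structure Superchannel (ι1 κ1 ι2 κ2 : Type) [Fintype ι1] [DecidableEq ι1]
    [Fintype κ1] [DecidableEq κ1] [Fintype ι2] [DecidableEq ι2]
    [Fintype κ2] [DecidableEq κ2] where
  e : ℕ
  pre : Mat ι2 →ₗ[ℂ] Mat (Fin e × ι1)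
  post : Mat (Fin e × κ1) →ₗ[ℂ] Mat κ2
  pre_channel : IsChannel pre
  post_channel : IsChannel post

/-- Action of a superchannel on a linear map. -/
def Superchannel.apply {ι1 κ1 ι2 κ2 : Type} [Fintype ι1] [DecidableEq ι1]
    [Fintype κ1] [DecidableEq κ1] [Fintype ι2] [DecidableEq ι2]
    [Fintype κ2] [DecidableEq κ2] (Θ : Superchannel ι1 κ1 ι2 κ2)
    (L : Mat ι1 →ₗ[ℂ] Mat κ1) : Mat ι2 →ₗ[ℂ] Mat κ2 :=
  Θ.post ∘ₗ (tensorL (LinearMap.id : Mat (Fin Θ.e) →ₗ[ℂ] Mat (Fin Θ.e)) L) ∘ₗ Θ.pre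


/-- A conditional Gibbs-preserving superchannel (distillation direction): it maps every
conditionally thermalizing channel `T^β ⊗ Q̃` to a conditionally uniformly mixing channel
`R^π_m ⊗ Q̃'` for some side channel `Q̃'`. -/
def IsCGPSdist {a' b' a b m d' d : ℕ} (γ : Mat (Fin a))
    (Θ : Superchannel (Fin a' × Fin b') (Fin a × Fin b) (Fin m × Fin d') (Fin m × Fin d)) :
    Prop :=
  ∀ Qt : Mat (Fin b') →ₗ[ℂ] Mat (Fin b), IsChannel Qt →
    ∃ Qt' : Mat (Fin d') →ₗ[ℂ] Mat (Fin d), IsChannel Qt' ∧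
      Θ.apply (tensorL (replacer γ) Qt) = tensorL (replacer (uniformState m)) Qt'

/-- A conditional Gibbs-preserving superchannel (formation direction): it maps every
conditionally uniformly mixing channel `R^π_m ⊗ Q̃` to a conditionally thermalizing channel
`T^β ⊗ Q̃'` for some side channel `Q̃'`. -/
def IsCGPScost {a' b' a b m d' d : ℕ} (γ : Mat (Fin a))
    (Θ : Superchannel (Fin m × Fin d') (Fin m × Fin d) (Fin a' × Fin b') (Fin a × Fin b)) :
    Prop :=
  ∀ Qt : Mat (Fin d') →ₗ[ℂ] Mat (Fin d), IsChannel Qt →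
    ∃ Qt' : Mat (Fin b') →ₗ[ℂ] Mat (Fin b), IsChannel Qt' ∧
      Θ.apply (tensorL (replacer (uniformState m)) Qt) = tensorL (replacer γ) Qt'

/-- One-shot conditional athermality distillation yield `Dist^{(1,ε)}(N, T^β)`:
the worst case over side channels `Q` of the largest `log₂ m` such that some conditional
Gibbs-preserving superchannel converts `(N, T^β⊗Q)` into `(id_m⊗Q', R^π_m⊗Q')`
within purified channel distance `ε`. -/
def DistOneShot {a' b' a b : ℕ} (N : Mat (Fin a' × Fin b') →ₗ[ℂ] Mat (Fin a × Fin b))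
    (γ : Mat (Fin a)) (ε : ℝ) : EReal :=
  ⨅ Q : {Q : Mat (Fin b') →ₗ[ℂ] Mat (Fin b) // IsChannel Q},
    sSup {x : EReal | ∃ m d' d : ℕ, ∃ Q' : Mat (Fin d') →ₗ[ℂ] Mat (Fin d),
      ∃ Θ : Superchannel (Fin a' × Fin b') (Fin a × Fin b) (Fin m × Fin d') (Fin m × Fin d),
        IsChannel Q' ∧ IsCGPSdist γ Θ ∧
        Θ.apply (tensorL (replacer γ) Q.1) = tensorL (replacer (uniformState m)) Q' ∧
        purifiedChannelDist
          (tensorL (LinearMap.id : Mat (Fin m) →ₗ[ℂ] Mat (Fin m)) Q') (Θ.apply N) ≤ ε ∧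
        x = ((Real.logb 2 (m : ℝ) : ℝ) : EReal)}

/-- One-shot conditional athermality formation cost `Cost^{(1,ε)}(N, T^β)`:
the best case over side channels `Q` of the least `log₂ m` such that some conditional
Gibbs-preserving superchannel converts `(id_m⊗Q'', R^π_m⊗Q'')` into `(N, T^β⊗Q)`
within purified channel distance `ε`. -/
def CostOneShot {a' b' a b : ℕ} (N : Mat (Fin a' × Fin b') →ₗ[ℂ] Mat (Fin a × Fin b))
    (γ : Mat (Fin a)) (ε : ℝ) : EReal :=
  ⨅ Q : {Q : Mat (Fin b') →ₗ[ℂ] Mat (Fin b) // IsChannel Q},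
    sInf {x : EReal | ∃ m d' d : ℕ, ∃ Q'' : Mat (Fin d') →ₗ[ℂ] Mat (Fin d),
      ∃ Θ : Superchannel (Fin m × Fin d') (Fin m × Fin d) (Fin a' × Fin b') (Fin a × Fin b),
        IsChannel Q'' ∧ IsCGPScost γ Θ ∧
        Θ.apply (tensorL (replacer (uniformState m)) Q'') = tensorL (replacer γ) Q.1 ∧
        purifiedChannelDist N
          (Θ.apply (tensorL (LinearMap.id : Mat (Fin m) →ₗ[ℂ] Mat (Fin m)) Q'')) ≤ ε ∧
        x = ((Real.logb 2 (m : ℝ) : ℝ) : EReal)}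


/-- A bipartite channel `N : A'B' → AB` is no-signaling (semicausal) from `A'` to `B`:
`tr_A ∘ N = tr_{A'} ⊗ Q` for some channel `Q : B' → B`. -/
def NoSignalFstToSnd {ιA' ιB' κA κB : Type} [Fintype ιA'] [DecidableEq ιA']
    [Fintype ιB'] [DecidableEq ιB'] [Fintype κA] [Fintype κB]
    (N : Mat (ιA' × ιB') →ₗ[ℂ] Mat (κA × κB)) : Prop :=
  ∃ Q : Mat ιB' →ₗ[ℂ] Mat κB, IsChannel Q ∧
    ∀ X : Mat (ιA' × ιB'), trFst (N X) = Q (trFst X)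

end

section PartialTrace

variable {ιA ιB : Type}

lemma trSnd_smul [Fintype ιB] (c : ℂ) (ρ : Matrix (ιA × ιB) (ιA × ιB) ℂ) :
    trSnd (c • ρ) = c • trSnd ρ := by
  ext i j
  simp [trSnd, Finset.mul_sum]

lemma trace_trSnd [Fintype ιA] [Fintype ιB] (ρ : Matrix (ιA × ιB) (ιA × ιB) ℂ) :
    (trSnd ρ).trace = ρ.trace := by
  simp [trSnd, Matrix.trace, Fintype.sum_prod_type]

variable [Fintype ιA]

lemma trFst_smul (c : ℂ) (ρ : Matrix (ιA × ιB) (ιA × ιB) ℂ) :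
    trFst (c • ρ) = c • trFst ρ := by
  ext i j
  simp [trFst, Finset.mul_sum]

lemma trFst_one [DecidableEq ιA] [DecidableEq ιB] :
    trFst (1 : Mat (ιA × ιB)) = (Fintype.card ιA : ℂ) • (1 : Mat ιB) := by
  ext i j
  rcases eq_or_ne i j with rfl | hij
  · simp [trFst]
  · simp [trFst, one_apply, hij]

lemma posSemidef_trFst [Fintype ιB] {ρ : Matrix (ιA × ιB) (ιA × ιB) ℂ} (hρ : ρ.PosSemidef) :
    (trFst ρ).PosSemidef := by
  have h : trFst ρ = ∑ k : ιA, ρ.submatrix (fun i => (k, i)) (fun j => (k, j)) := by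
    ext i j
    simp [trFst, Matrix.sum_apply]
  rw [h]
  exact posSemidef_sum _ fun k _ => hρ.submatrix _

end PartialTrace

section Choi

variable {ι κ : Type} [DecidableEq ι]

lemma trSnd_choiMatrix_apply [Fintype κ] (L : Mat ι →ₗ[ℂ] Mat κ) (i j : ι) :
    trSnd (choiMatrix L) i j = (L (single i j 1)).trace :=
  rfl

variable [Fintype ι]

def mapOfChoiMatrix (C : Matrix (ι × κ) (ι × κ) ℂ) : Mat ι →ₗ[ℂ] Mat κ where
  toFun X := Matrix.of fun p q => ∑ i, ∑ j, X i j * C (i, p) (j, q)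
  map_add' X Y := by
    ext p q
    simp [add_mul, Finset.sum_add_distrib]
  map_smul' c X := by
    ext p q
    simp only [of_apply, Matrix.smul_apply, smul_eq_mul, RingHom.id_apply, Finset.mul_sum,
      mul_assoc]

lemma choiMatrix_mapOfChoiMatrix (C : Matrix (ι × κ) (ι × κ) ℂ) :
    choiMatrix (mapOfChoiMatrix C) = C := by
  ext ⟨i, p⟩ ⟨j, q⟩
  simp [choiMatrix, mapOfChoiMatrix, single_apply, ite_and]

lemma trace_single_one (i j : ι) : (single i j (1 : ℂ)).trace = (1 : Mat ι) i j := by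
  rcases eq_or_ne i j with rfl | hij
  · simp [trace_single_eq_same]
  · simp [trace_single_eq_of_ne _ _ _ hij, one_apply_ne hij]

variable [Fintype κ]

lemma trace_map_eq_iff_trSnd_choiMatrix (L : Mat ι →ₗ[ℂ] Mat κ) :
    (∀ X, (L X).trace = X.trace) ↔ trSnd (choiMatrix L) = 1 := by
  constructor
  · intro hL
    ext i j
    rw [trSnd_choiMatrix_apply, hL, trace_single_one]
  · intro hC X
    induction X using Matrix.induction_on' with
    | h_zero => simp
    | h_add X Y hX hY => simp [trace_add, hX, hY]
    | h_std_basis i j x =>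
      have hx : single i j x = x • single i j (1 : ℂ) := by simp
      rw [hx, map_smul, trace_smul, trace_smul, ← trSnd_choiMatrix_apply, hC, trace_single_one]

lemma isChannel_mapOfChoiMatrix_iff (C : Matrix (ι × κ) (ι × κ) ℂ) :
    IsChannel (mapOfChoiMatrix C) ↔ C.PosSemidef ∧ trSnd C = 1 := by
  rw [IsChannel, trace_map_eq_iff_trSnd_choiMatrix, choiMatrix_mapOfChoiMatrix]

lemma exists_isChannel_choiState_eq [Nonempty ι] {J : Matrix (ι × κ) (ι × κ) ℂ}
    (hJ : J.PosSemidef) (hJtr : trSnd J = (Fintype.card ι : ℂ)⁻¹ • 1) :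
    ∃ Q : Mat ι →ₗ[ℂ] Mat κ, IsChannel Q ∧ choiState Q = J := by
  have hcard : (Fintype.card ι : ℂ) ≠ 0 := by exact_mod_cast Fintype.card_ne_zero
  refine ⟨mapOfChoiMatrix ((Fintype.card ι : ℂ) • J), ?_, ?_⟩
  · rw [isChannel_mapOfChoiMatrix_iff, trSnd_smul, hJtr, smul_smul, mul_inv_cancel₀ hcard,
      one_smul]
    exact ⟨hJ.smul (by positivity), rfl⟩
  · rw [choiState, choiMatrix_mapOfChoiMatrix, smul_smul, inv_mul_cancel₀ hcard, one_smul]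

namespace IsChannel

variable {L : Mat ι →ₗ[ℂ] Mat κ}

lemma trSnd_choiMatrix (hL : IsChannel L) : trSnd (choiMatrix L) = 1 :=
  (trace_map_eq_iff_trSnd_choiMatrix L).1 hL.2

lemma posSemidef_choiState (hL : IsChannel L) : (choiState L).PosSemidef :=
  hL.1.smul (by positivity)

lemma isState_choiState [Nonempty ι] (hL : IsChannel L) : IsState (choiState L) := by
  refine ⟨hL.posSemidef_choiState, ?_⟩
  rw [choiState, trace_smul, ← trace_trSnd, hL.trSnd_choiMatrix, trace_one, smul_eq_mul,
    inv_mul_cancel₀ (by exact_mod_cast Fintype.card_ne_zero)]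

end IsChannel

end Choi

section Bipartite

variable {ιA' ιB' κA κB : Type} [Fintype ιA'] [DecidableEq ιA'] [Fintype ιB'] [DecidableEq ιB']
  [Fintype κA] [Fintype κB] {N : Mat (ιA' × ιB') →ₗ[ℂ] Mat (κA × κB)}

lemma trSnd_trFst_biChoiState_eq_trFst_trSnd (N : Mat (ιA' × ιB') →ₗ[ℂ] Mat (κA × κB)) :
    trSnd (trFst (biChoiState N)) = trFst (trSnd (choiState N)) := by
  ext i j
  simp only [trSnd, trFst, biChoiState, of_apply, Fintype.sum_prod_type]
  rw [Finset.sum_comm]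
  exact Finset.sum_congr rfl fun _ _ => Finset.sum_comm

namespace IsChannel

lemma posSemidef_biChoiState (hN : IsChannel N) : (biChoiState N).PosSemidef := by
  have hsub : biChoiState N =
      (choiState N).submatrix (fun p => ((p.1.1, p.2.1), (p.1.2, p.2.2)))
        (fun p => ((p.1.1, p.2.1), (p.1.2, p.2.2))) := rfl
  rw [hsub]
  exact hN.posSemidef_choiState.submatrix _

lemma trSnd_trFst_biChoiState [Nonempty ιA'] (hN : IsChannel N) :
    trSnd (trFst (biChoiState N)) = (Fintype.card ιB' : ℂ)⁻¹ • 1 := by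
  have hA : (Fintype.card ιA' : ℂ) ≠ 0 := by exact_mod_cast Fintype.card_ne_zero
  rw [trSnd_trFst_biChoiState_eq_trFst_trSnd, choiState, trSnd_smul, hN.trSnd_choiMatrix, trFst_smul,
    trFst_one, smul_smul, Fintype.card_prod, Nat.cast_mul]
  field_simp

variable [DecidableEq κA] [DecidableEq κB]

lemma condMinDown_sub_le_chanCondMin [Nonempty ιA'] [Nonempty ιB'] (hN : IsChannel N) :
    condMinDown (biChoiState N) - ((Real.logb 2 (Fintype.card ιA') : ℝ) : EReal) ≤
      chanCondMin N := by
  obtain ⟨Q, hQ, hQJ⟩ := exists_isChannel_choiState_eq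
    (posSemidef_trFst hN.posSemidef_biChoiState) hN.trSnd_trFst_biChoiState
  have hinf : ⨅ Q : {Q : Mat ιB' →ₗ[ℂ] Mat κB // IsChannel Q},
      Dmax (biChoiState N) ((1 : Mat (ιA' × κA)) ⊗ₖ choiState Q.1) ≤
        Dmax (biChoiState N) ((1 : Mat (ιA' × κA)) ⊗ₖ trFst (biChoiState N)) :=
    iInf_le_of_le ⟨Q, hQ⟩ (by rw [hQJ])
  exact EReal.sub_le_sub (EReal.neg_le_neg_iff.mpr hinf) le_rfl

end IsChannel

lemma chanCondMin_le_condMin_sub [DecidableEq κA] [DecidableEq κB] [Nonempty ιB']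
    (N : Mat (ιA' × ιB') →ₗ[ℂ] Mat (κA × κB)) :
    chanCondMin N ≤
      condMin (biChoiState N) - ((Real.logb 2 (Fintype.card ιA') : ℝ) : EReal) := by
  have hinf : ⨅ σ : {σ : Mat (ιB' × κB) // IsState σ},
      Dmax (biChoiState N) ((1 : Mat (ιA' × κA)) ⊗ₖ σ.1) ≤
        ⨅ Q : {Q : Mat ιB' →ₗ[ℂ] Mat κB // IsChannel Q},
          Dmax (biChoiState N) ((1 : Mat (ιA' × κA)) ⊗ₖ choiState Q.1) :=
    le_iInf fun Q => iInf_le_of_le ⟨choiState Q.1, Q.2.isState_choiState⟩ le_rfl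
  exact EReal.sub_le_sub (EReal.neg_le_neg_iff.mpr hinf) le_rfl

end Bipartite

theorem conditional_channel_min_entropy_choi_bounds_general
    {a' b' a b : ℕ} [NeZero a'] [NeZero b']
    (N : Mat (Fin a' × Fin b') →ₗ[ℂ] Mat (Fin a × Fin b)) (hN : IsChannel N) :
    condMinDown (biChoiState N) - ((Real.logb 2 (a' : ℝ) : ℝ) : EReal) ≤ chanCondMin N ∧
    chanCondMin N ≤ condMin (biChoiState N) - ((Real.logb 2 (a' : ℝ) : ℝ) : EReal) := by
  have hlower := hN.condMinDown_sub_le_chanCondMin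
  have hupper := chanCondMin_le_condMin_sub N
  rw [Fintype.card_fin] at hlower hupper
  exact ⟨hlower, hupper⟩

/-- For every bipartite quantum channel `N : A'B' → AB`, its conditional
min-entropy is sandwiched between the two conditional min-entropies of its Choi state:
`S↓_∞(R_AA|R_BB)_{Φ^N} − log|A'| ≤ S_∞[A|B]_N ≤ S_∞(R_AA|R_BB)_{Φ^N} − log|A'|`. -/
theorem conditional_channel_min_entropy_choi_bounds
    {a' b' a b : ℕ} [NeZero a'] [NeZero b'] [NeZero a] [NeZero b]
    (N : Mat (Fin a' × Fin b') →ₗ[ℂ] Mat (Fin a × Fin b)) (hN : IsChannel N) :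
    condMinDown (biChoiState N) - ((Real.logb 2 (a' : ℝ) : ℝ) : EReal) ≤ chanCondMin N ∧
    chanCondMin N ≤ condMin (biChoiState N) - ((Real.logb 2 (a' : ℝ) : ℝ) : EReal) :=
  conditional_channel_min_entropy_choi_bounds_general N hN
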